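/- Let G be a group and let C be a free G-category over a commutative ring k, with a chosen representative x_α in each G-orbit α of objects. For a morphism f ∈ Hom_C(x,y) with x ∈ α, y ∈ β, define deg[f] ∈ G by: letting s be the unique element with s·x = x_α, deg[f] is the unique element with (deg[f])⁻¹·x_β = s·y. Then deg[f] depends only on the class [f] ∈ Hom_{C/G}(α,β) (it is invariant under replacing f by u·f), the homogeneous components Hom_{C/G}^s(α,β) spanned by classes of degree s give a decomposition Hom_{C/G}(α,β) = ⊕_{s∈G} Hom_{C/G}^s(α,β), and deg([g]∘[f]) = deg[g]·deg[f]; thus C/G is a G-graded category over k. -/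

import Mathlib

/-! Basic notion of a (small) category over a commutative ring `k`:
objects form a type, morphism sets are `k`-modules and composition is `k`-bilinear. -/

structure kCat (k : Type) [CommRing k] where
  Obj : Type
  Hom : Obj → Obj → Type
  [homAdd : ∀ x y, AddCommGroup (Hom x y)]
  [homMod : ∀ x y, Module k (Hom x y)]
  id : ∀ x, Hom x x
  comp : ∀ {x y z}, Hom y z → Hom x y → Hom x z
  id_comp : ∀ {x y} (f : Hom x y), comp (id y) f = f
  comp_id : ∀ {x y} (f : Hom x y), comp f (id x) = f
  assoc : ∀ {w x y z} (h : Hom y z) (g : Hom x y) (f : Hom w x),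
    comp (comp h g) f = comp h (comp g f)
  comp_add_left : ∀ {x y z} (g g' : Hom y z) (f : Hom x y),
    comp (g + g') f = comp g f + comp g' f
  comp_add_right : ∀ {x y z} (g : Hom y z) (f f' : Hom x y),
    comp g (f + f') = comp g f + comp g f'
  comp_smul_left : ∀ {x y z} (a : k) (g : Hom y z) (f : Hom x y),
    comp (a • g) f = a • comp g f
  comp_smul_right : ∀ {x y z} (a : k) (g : Hom y z) (f : Hom x y),
    comp g (a • f) = a • comp g f

attribute [instance] kCat.homAdd kCat.homMod

/-- Transport of a morphism along equalities of its source and target. -/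
def kCat.trans2 {k : Type} [CommRing k] (C : kCat k) {x x' y y' : C.Obj}
    (hx : x = x') (hy : y = y') (f : C.Hom x y) : C.Hom x' y' :=
  cast (by rw [hx, hy]) f

/-- A `k`-linear functor between categories over `k`. -/
structure kFunctor (k : Type) [CommRing k] (C D : kCat k) where
  obj : C.Obj → D.Obj
  map : ∀ x y, C.Hom x y →ₗ[k] D.Hom (obj x) (obj y)
  map_id : ∀ x, map x x (C.id x) = D.id (obj x)
  map_comp : ∀ {x y z} (g : C.Hom y z) (f : C.Hom x y),
    map x z (C.comp g f) = D.comp (map y z g) (map x y f)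

/-- The identity functor. -/
def kFunctor.idF (k : Type) [CommRing k] (C : kCat k) : kFunctor k C C where
  obj := fun x => x
  map := fun _ _ => LinearMap.id
  map_id := fun _ => rfl
  map_comp := fun _ _ => rfl

/-- Composition of `k`-linear functors. -/
def kFunctor.compF {k : Type} [CommRing k] {C D E : kCat k}
    (F : kFunctor k D E) (H : kFunctor k C D) : kFunctor k C E where
  obj := fun x => F.obj (H.obj x)
  map := fun x y => (F.map _ _).comp (H.map x y)
  map_id := fun x => by simp [H.map_id, F.map_id]
  map_comp := fun g f => by simp [H.map_comp, F.map_comp]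

/-- A natural transformation between `k`-linear functors. -/
structure kNatTrans {k : Type} [CommRing k] {C D : kCat k} (F G : kFunctor k C D) where
  app : ∀ x, D.Hom (F.obj x) (G.obj x)
  naturality : ∀ {x y} (f : C.Hom x y),
    D.comp (app y) (F.map x y f) = D.comp (G.map x y f) (app x)

/-- A natural isomorphism between `k`-linear functors, given by a pair of mutually
inverse natural transformations. -/
structure kNatIso {k : Type} [CommRing k] {C D : kCat k} (F G : kFunctor k C D) where
  hom : kNatTrans F G
  inv : kNatTrans G F
  hom_inv : ∀ x, D.comp (inv.app x) (hom.app x) = D.id (F.obj x)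
  inv_hom : ∀ x, D.comp (hom.app x) (inv.app x) = D.id (G.obj x)

/-- An equivalence of categories over `k`. -/
structure kEquivalence (k : Type) [CommRing k] (C D : kCat k) where
  F : kFunctor k C D
  G : kFunctor k D C
  unitIso : kNatIso (kFunctor.idF k C) (kFunctor.compF G F)
  counitIso : kNatIso (kFunctor.compF F G) (kFunctor.idF k D)

/-- An isomorphism of categories over `k`: a `k`-linear functor which is bijective on
objects and bijective (hence a `k`-module isomorphism) on each morphism module. -/
structure kCatIso (k : Type) [CommRing k] (C D : kCat k) where
  F : kFunctor k C D
  objBij : Function.Bijective F.obj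
  homBij : ∀ x y, Function.Bijective (F.map x y)

/-- The full subcategory on the objects satisfying a predicate `P`. -/
def kCat.fullSub {k : Type} [CommRing k] (C : kCat k) (P : C.Obj → Prop) : kCat k where
  Obj := { x : C.Obj // P x }
  Hom := fun x y => C.Hom x.1 y.1
  homAdd := fun _ _ => inferInstance
  homMod := fun _ _ => inferInstance
  id := fun x => C.id x.1
  comp := fun g f => C.comp g f
  id_comp := fun f => C.id_comp f
  comp_id := fun f => C.comp_id f
  assoc := fun h g f => C.assoc h g f
  comp_add_left := fun g g' f => C.comp_add_left g g' f
  comp_add_right := fun g f f' => C.comp_add_right g f f'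
  comp_smul_left := fun a g f => C.comp_smul_left a g f
  comp_smul_right := fun a g f => C.comp_smul_right a g f

/-- The inclusion functor of a full subcategory. -/
def kCat.inclFunctor {k : Type} [CommRing k] (C : kCat k) (P : C.Obj → Prop) :
    kFunctor k (C.fullSub P) C where
  obj := fun x => x.1
  map := fun _ _ => LinearMap.id
  map_id := fun _ => rfl
  map_comp := fun _ _ => rfl

/-! Direct sum helpers. -/

open DirectSum

/-- The element of a direct sum concentrated in one component. -/
noncomputable def dsSingle {ι : Type} {M : ι → Type} [∀ i, AddCommGroup (M i)]
    (i : ι) (m : M i) : ⨁ i, M i :=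
  letI := Classical.decEq ι
  DFinsupp.single i m

/-- The linear inclusion of one component into a direct sum. -/
noncomputable def dsLof (k : Type) [CommRing k] {ι : Type} (M : ι → Type)
    [∀ i, AddCommGroup (M i)] [∀ i, Module k (M i)] (i : ι) : M i →ₗ[k] ⨁ i, M i :=
  letI := Classical.decEq ι
  DirectSum.lof k ι M i

/-- A family of submodules of `M` is *internal* (i.e. `M` is their internal direct sum)
when the canonical summation map from the direct sum of the submodules to `M`
is bijective. -/
def SubmodulesInternal (k : Type) [CommRing k] {ι : Type} {M : Type}
    [AddCommGroup M] [Module k M] (p : ι → Submodule k M) : Prop :=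
  letI := Classical.decEq ι
  Function.Bijective
    (⇑(DFinsupp.sumAddHom (β := fun i => ↥(p i)) fun i => ((p i).subtype).toAddMonoidHom))

/-! `G`-categories over `k`, free actions, the quotient (orbit) category of a free
`G`-category, and the skew category. -/

/-- An action of a group `G` on a category `C` over `k`: an action on objects together
with `k`-linear maps on morphism modules, compatible with composition, identities and
the group law. -/
structure GAction (k G : Type) [CommRing k] [Group G] (C : kCat k) where
  smulObj : G → C.Obj → C.Obj
  one_smulObj : ∀ x, smulObj 1 x = x
  mul_smulObj : ∀ s t x, smulObj (s * t) x = smulObj s (smulObj t x)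
  smulHom : ∀ (s : G) (x y : C.Obj), C.Hom x y →ₗ[k] C.Hom (smulObj s x) (smulObj s y)
  smulHom_comp : ∀ (s : G) {x y z} (g : C.Hom y z) (f : C.Hom x y),
    smulHom s x z (C.comp g f) = C.comp (smulHom s y z g) (smulHom s x y f)
  smulHom_id : ∀ (s : G) (x), smulHom s x x (C.id x) = C.id (smulObj s x)
  one_smulHom : ∀ {x y} (f : C.Hom x y), HEq (smulHom 1 x y f) f
  mul_smulHom : ∀ (s t : G) {x y} (f : C.Hom x y),
    HEq (smulHom (s * t) x y f) (smulHom s _ _ (smulHom t x y f))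

namespace GAction

variable {k G : Type} [CommRing k] [Group G] {C : kCat k}

/-- The action is free when no nontrivial group element fixes an object. -/
def IsFree (A : GAction k G C) : Prop := ∀ (s : G) (x : C.Obj), A.smulObj s x = x → s = 1

/-- The orbit equivalence relation on objects. -/
def orbitSetoid (A : GAction k G C) : Setoid C.Obj where
  r x y := ∃ s : G, A.smulObj s x = y
  iseqv := by
    refine ⟨fun x => ⟨1, A.one_smulObj x⟩, ?_, ?_⟩
    · rintro x y ⟨s, h⟩
      exact ⟨s⁻¹, by rw [← h, ← A.mul_smulObj, inv_mul_cancel, A.one_smulObj]⟩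
    · rintro x y z ⟨s, h⟩ ⟨t, h'⟩
      exact ⟨t * s, by rw [A.mul_smulObj, h, h']⟩

/-- The set of `G`-orbits of objects. -/
def QuotObj (A : GAction k G C) : Type := Quotient A.orbitSetoid

/-- The orbit of an object. -/
def orb (A : GAction k G C) (x : C.Obj) : A.QuotObj := Quotient.mk A.orbitSetoid x

theorem orb_smul (A : GAction k G C) (s : G) (x : C.Obj) :
    A.orb (A.smulObj s x) = A.orb x :=
  (Quotient.sound ⟨s, rfl⟩ : A.orb x = A.orb (A.smulObj s x)).symm

/-- The index type of pairs `(x, y)` with `x` in the orbit `α` and `y` in the orbit `β`. -/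
def PairIdx (A : GAction k G C) (α β : A.QuotObj) : Type :=
  { x : C.Obj // A.orb x = α } × { y : C.Obj // A.orb y = β }

/-- The direct sum `⊕_{x ∈ α, y ∈ β} Hom_C(x, y)`. -/
def HomSum (A : GAction k G C) (α β : A.QuotObj) : Type :=
  ⨁ p : A.PairIdx α β, C.Hom p.1.1 p.2.1

noncomputable instance (A : GAction k G C) (α β : A.QuotObj) :
    AddCommGroup (A.HomSum α β) :=
  inferInstanceAs (AddCommGroup (⨁ p : A.PairIdx α β, C.Hom p.1.1 p.2.1))

noncomputable instance (A : GAction k G C) (α β : A.QuotObj) :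
    Module k (A.HomSum α β) :=
  inferInstanceAs (Module k (⨁ p : A.PairIdx α β, C.Hom p.1.1 p.2.1))

/-- The element of `HomSum` concentrated in the component indexed by `(x, y)`. -/
noncomputable def homSumSingle (A : GAction k G C) {α β : A.QuotObj} {x y : C.Obj}
    (hx : A.orb x = α) (hy : A.orb y = β) (f : C.Hom x y) : A.HomSum α β :=
  dsSingle (M := fun p : A.PairIdx α β => C.Hom p.1.1 p.2.1) ⟨⟨x, hx⟩, ⟨y, hy⟩⟩ f

/-- The submodule of `HomSum` spanned by the elements `s • f - f`; quotienting by it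
produces the largest quotient on which `G` acts trivially. -/
noncomputable def gSub (A : GAction k G C) (α β : A.QuotObj) :
    Submodule k (A.HomSum α β) :=
  Submodule.span k
    {z | ∃ (s : G) (x y : C.Obj) (hx : A.orb x = α) (hy : A.orb y = β) (f : C.Hom x y),
      z = A.homSumSingle ((A.orb_smul s x).trans hx) ((A.orb_smul s y).trans hy)
            (A.smulHom s x y f)
          - A.homSumSingle hx hy f}

/-- The morphism module of the quotient category `C/G` from the orbit `α` to the
orbit `β`. -/
def QuotHom (A : GAction k G C) (α β : A.QuotObj) : Type :=
  A.HomSum α β ⧸ A.gSub α β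

noncomputable instance (A : GAction k G C) (α β : A.QuotObj) :
    AddCommGroup (A.QuotHom α β) :=
  inferInstanceAs (AddCommGroup (A.HomSum α β ⧸ A.gSub α β))

noncomputable instance (A : GAction k G C) (α β : A.QuotObj) :
    Module k (A.QuotHom α β) :=
  inferInstanceAs (Module k (A.HomSum α β ⧸ A.gSub α β))

/-- The `k`-linear map sending a morphism `f : x → y` of `C` to its class in the
morphism module of the quotient category. -/
noncomputable def projL (A : GAction k G C) {α β : A.QuotObj} {x y : C.Obj}
    (hx : A.orb x = α) (hy : A.orb y = β) : C.Hom x y →ₗ[k] A.QuotHom α β :=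
  (A.gSub α β).mkQ.comp
    (letI := Classical.decEq (A.PairIdx α β)
     DirectSum.lof k (A.PairIdx α β) (fun p => C.Hom p.1.1 p.2.1) ⟨⟨x, hx⟩, ⟨y, hy⟩⟩)

/-- The class of a morphism `f : x → y` of `C` in the quotient category. -/
noncomputable def proj (A : GAction k G C) {α β : A.QuotObj} {x y : C.Obj}
    (hx : A.orb x = α) (hy : A.orb y = β) (f : C.Hom x y) : A.QuotHom α β :=
  A.projL hx hy f

end GAction

/-- The structure of the quotient category `C/G` of a (free) `G`-category `C` over `k`:
its objects are the `G`-orbits of objects of `C`, its morphism modules are the modules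
`QuotHom`, and its composition and identities are induced by those of `C` via the
projection, making it a category over `k`. -/
structure QuotStr {k G : Type} [CommRing k] [Group G] {C : kCat k} (A : GAction k G C) where
  comp : ∀ {α β γ : A.QuotObj}, A.QuotHom β γ → A.QuotHom α β → A.QuotHom α γ
  id : ∀ α : A.QuotObj, A.QuotHom α α
  id_comp : ∀ {α β} (f : A.QuotHom α β), comp (id β) f = f
  comp_id : ∀ {α β} (f : A.QuotHom α β), comp f (id α) = f
  assoc : ∀ {α β γ δ} (h : A.QuotHom γ δ) (g : A.QuotHom β γ) (f : A.QuotHom α β),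
    comp (comp h g) f = comp h (comp g f)
  comp_add_left : ∀ {α β γ} (g g' : A.QuotHom β γ) (f : A.QuotHom α β),
    comp (g + g') f = comp g f + comp g' f
  comp_add_right : ∀ {α β γ} (g : A.QuotHom β γ) (f f' : A.QuotHom α β),
    comp g (f + f') = comp g f + comp g f'
  comp_smul_left : ∀ {α β γ} (a : k) (g : A.QuotHom β γ) (f : A.QuotHom α β),
    comp (a • g) f = a • comp g f
  comp_smul_right : ∀ {α β γ} (a : k) (g : A.QuotHom β γ) (f : A.QuotHom α β),
    comp g (a • f) = a • comp g f
  comp_proj : ∀ {α β γ} {x y z : C.Obj}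
    (hx : A.orb x = α) (hy : A.orb y = β) (hz : A.orb z = γ)
    (g : C.Hom y z) (f : C.Hom x y),
    comp (A.proj hy hz g) (A.proj hx hy f) = A.proj hx hz (C.comp g f)
  id_proj : ∀ {α} {x : C.Obj} (hx : A.orb x = α), id α = A.proj hx hx (C.id x)

/-- The quotient category `C/G` as a category over `k`. -/
noncomputable def QuotStr.toKCat {k G : Type} [CommRing k] [Group G] {C : kCat k}
    {A : GAction k G C} (Q : QuotStr A) : kCat k where
  Obj := A.QuotObj
  Hom := A.QuotHom
  homAdd := fun _ _ => inferInstance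
  homMod := fun _ _ => inferInstance
  id := Q.id
  comp := Q.comp
  id_comp := Q.id_comp
  comp_id := Q.comp_id
  assoc := Q.assoc
  comp_add_left := Q.comp_add_left
  comp_add_right := Q.comp_add_right
  comp_smul_left := Q.comp_smul_left
  comp_smul_right := Q.comp_smul_right

/-- The homogeneous component of degree `d` of the morphism module `QuotHom α β` of
the quotient category, relative to a choice `r` of representatives of the orbits:
it is spanned by the classes `[f]` of morphisms `f : x → y` of `C` whose degree is
`d`, i.e. such that, `s` being the element carrying `x` to the representative `r α`,
the element `d⁻¹` carries the representative `r β` to `s·y`. -/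
noncomputable def GAction.degSub {k G : Type} [CommRing k] [Group G] {C : kCat k}
    (A : GAction k G C) (r : A.QuotObj → C.Obj) (d : G) (α β : A.QuotObj) :
    Submodule k (A.QuotHom α β) :=
  Submodule.span k
    {z | ∃ (x y : C.Obj) (hx : A.orb x = α) (hy : A.orb y = β) (f : C.Hom x y) (s : G),
      A.smulObj s x = r α ∧ A.smulObj d⁻¹ (r β) = A.smulObj s y ∧ z = A.proj hx hy f}

namespace GAction

variable {k G : Type} [CommRing k] [Group G] {C : kCat k} (A : GAction k G C)

theorem smul_cancel (hfree : A.IsFree) {s t : G} {x : C.Obj}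
    (h : A.smulObj s x = A.smulObj t x) : s = t := by
  have h2 : A.smulObj (t⁻¹ * s) x = x := by
    rw [A.mul_smulObj, h, ← A.mul_smulObj, inv_mul_cancel, A.one_smulObj]
  exact (inv_mul_eq_one.mp (hfree _ _ h2)).symm

/-- An element of `G` carrying `x` to `y`, for `x, y` in the same orbit. -/
noncomputable def transEl (x y : C.Obj) (h : A.orb x = A.orb y) : G :=
  (Quotient.exact h).choose

theorem transEl_spec (x y : C.Obj) (h : A.orb x = A.orb y) :
    A.smulObj (A.transEl x y h) x = y :=
  (Quotient.exact h).choose_spec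

variable (r : A.QuotObj → C.Obj) (hr : ∀ α, A.orb (r α) = α)

/-- The element carrying `x` to the representative of its orbit. -/
noncomputable def sEl {α : A.QuotObj} (x : C.Obj) (hx : A.orb x = α) : G :=
  A.transEl x (r α) (by rw [hx, hr])

theorem sEl_spec {α : A.QuotObj} (x : C.Obj) (hx : A.orb x = α) :
    A.smulObj (A.sEl r hr x hx) x = r α := A.transEl_spec _ _ _

/-- The degree of (the class of) a morphism from `x` to `y`. -/
noncomputable def degPair {α β : A.QuotObj} (x y : C.Obj)
    (hx : A.orb x = α) (hy : A.orb y = β) : G :=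
  (A.transEl (r β) (A.smulObj (A.sEl r hr x hx) y)
    (by rw [hr, A.orb_smul, hy]))⁻¹

theorem degPair_spec {α β : A.QuotObj} (x y : C.Obj) (hx : A.orb x = α)
    (hy : A.orb y = β) :
    A.smulObj (A.degPair r hr x y hx hy)⁻¹ (r β)
      = A.smulObj (A.sEl r hr x hx) y := by
  rw [degPair, inv_inv]; exact A.transEl_spec _ _ _

theorem deg_unique (hfree : A.IsFree) {α β : A.QuotObj} {x y : C.Obj} {s d s' d' : G}
    (h1 : A.smulObj s x = r α) (h2 : A.smulObj d⁻¹ (r β) = A.smulObj s y)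
    (h1' : A.smulObj s' x = r α) (h2' : A.smulObj d'⁻¹ (r β) = A.smulObj s' y) :
    d = d' := by
  have hs : s = s' := A.smul_cancel hfree (h1.trans h1'.symm)
  subst hs
  exact inv_injective (A.smul_cancel hfree (h2.trans h2'.symm))

theorem degPair_eq (hfree : A.IsFree) {α β : A.QuotObj} (x y : C.Obj)
    (hx : A.orb x = α) (hy : A.orb y = β) {s d : G}
    (h1 : A.smulObj s x = r α) (h2 : A.smulObj d⁻¹ (r β) = A.smulObj s y) :
    A.degPair r hr x y hx hy = d :=
  A.deg_unique r hfree (A.sEl_spec r hr x hx) (A.degPair_spec r hr x y hx hy) h1 h2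

theorem proj_eq_mk {α β : A.QuotObj} {x y : C.Obj} (hx : A.orb x = α)
    (hy : A.orb y = β) (f : C.Hom x y) :
    A.proj hx hy f = Submodule.Quotient.mk (A.homSumSingle hx hy f) := rfl

theorem proj_smul (u : G) {α β : A.QuotObj} {x y : C.Obj} (hx : A.orb x = α)
    (hy : A.orb y = β) (f : C.Hom x y) :
    A.proj ((A.orb_smul u x).trans hx) ((A.orb_smul u y).trans hy) (A.smulHom u x y f)
      = A.proj hx hy f := by
  rw [A.proj_eq_mk, A.proj_eq_mk]
  exact (Submodule.Quotient.eq (A.gSub α β)).mpr (Submodule.subset_span ⟨u, x, y, hx, hy, f, rfl⟩)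

/-- the map sending a class to its degree-indexed component. -/
noncomputable def phi (α β : A.QuotObj) :
    A.HomSum α β →ₗ[k] ⨁ _d : G, A.QuotHom α β :=
  letI := Classical.decEq (A.PairIdx α β)
  DirectSum.toModule k (A.PairIdx α β) (⨁ _d : G, A.QuotHom α β)
    (fun p => (dsLof k (fun _ : G => A.QuotHom α β)
        (A.degPair r hr p.1.1 p.2.1 p.1.2 p.2.2)).comp (A.projL p.1.2 p.2.2))

theorem phi_single {α β : A.QuotObj} {x y : C.Obj} (hx : A.orb x = α)
    (hy : A.orb y = β) (f : C.Hom x y) :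
    A.phi r hr α β (A.homSumSingle hx hy f)
      = dsLof k (fun _ : G => A.QuotHom α β) (A.degPair r hr x y hx hy)
          (A.proj hx hy f) := by
  letI := Classical.decEq (A.PairIdx α β)
  exact DirectSum.toModule_lof (R := k) (ι := A.PairIdx α β)
    (M := fun p => C.Hom p.1.1 p.2.1) (N := ⨁ _d : G, A.QuotHom α β)
    (φ := fun p => (dsLof k (fun _ : G => A.QuotHom α β)
        (A.degPair r hr p.1.1 p.2.1 p.1.2 p.2.2)).comp (A.projL p.1.2 p.2.2))
    (⟨⟨x, hx⟩, ⟨y, hy⟩⟩ : A.PairIdx α β) f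

theorem gSub_le_ker (hfree : A.IsFree) (α β : A.QuotObj) :
    A.gSub α β ≤ LinearMap.ker (A.phi r hr α β) := by
  refine Submodule.span_le.mpr ?_
  rintro z ⟨u, x, y, hx, hy, f, rfl⟩
  rw [SetLike.mem_coe, LinearMap.mem_ker, map_sub, A.phi_single, A.phi_single,
    A.proj_smul u hx hy f]
  have hdeg : A.degPair r hr (A.smulObj u x) (A.smulObj u y)
      ((A.orb_smul u x).trans hx) ((A.orb_smul u y).trans hy)
      = A.degPair r hr x y hx hy := by
    refine A.degPair_eq r hr hfree _ _ _ _ (s := A.sEl r hr x hx * u⁻¹) ?_ ?_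
    · rw [← A.mul_smulObj,
        show A.sEl r hr x hx * u⁻¹ * u = A.sEl r hr x hx by group]
      exact A.sEl_spec r hr x hx
    · rw [← A.mul_smulObj,
        show A.sEl r hr x hx * u⁻¹ * u = A.sEl r hr x hx by group]
      exact A.degPair_spec r hr x y hx hy
  rw [hdeg, sub_self]

/-- The grading map on the quotient hom-module. -/
noncomputable def psi (hfree : A.IsFree) (α β : A.QuotObj) :
    A.QuotHom α β →ₗ[k] ⨁ _d : G, A.QuotHom α β :=
  (A.gSub α β).liftQ (A.phi r hr α β) (A.gSub_le_ker r hr hfree α β)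

theorem psi_proj (hfree : A.IsFree) {α β : A.QuotObj} {x y : C.Obj}
    (hx : A.orb x = α) (hy : A.orb y = β) (f : C.Hom x y) :
    A.psi r hr hfree α β (A.proj hx hy f)
      = dsLof k (fun _ : G => A.QuotHom α β) (A.degPair r hr x y hx hy)
          (A.proj hx hy f) := by
  rw [A.proj_eq_mk hx hy f]
  exact (Submodule.liftQ_apply _ _ _).trans (A.phi_single r hr hx hy f)

theorem psi_mem (hfree : A.IsFree) {α β : A.QuotObj} {d : G} {v : A.QuotHom α β}
    (hv : v ∈ A.degSub r d α β) :
    A.psi r hr hfree α β v = dsLof k (fun _ : G => A.QuotHom α β) d v := by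
  refine Submodule.span_induction ?_ ?_ ?_ ?_ hv
  · rintro z ⟨x, y, hx, hy, f, s, h1, h2, rfl⟩
    rw [A.psi_proj r hr hfree hx hy f,
      A.degPair_eq r hr hfree x y hx hy h1 h2]
  · simp
  · intro a b _ _ iha ihb
    rw [map_add, iha, ihb, map_add]
  · intro a x _ ih
    rw [map_smul, ih, map_smul]

include hr in
theorem internal (hfree : A.IsFree) (α β : A.QuotObj) :
    SubmodulesInternal k (fun d => A.degSub r d α β) := by
  letI := Classical.decEq G
  letI := Classical.decEq (A.PairIdx α β)
  set F : ∀ d : G, ↥(A.degSub r d α β) →+ A.QuotHom α β :=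
    fun d => ((A.degSub r d α β).subtype).toAddMonoidHom with hF
  show Function.Bijective ⇑(DFinsupp.sumAddHom F)
  constructor
  · rw [injective_iff_map_eq_zero]
    intro w hw
    have key : ∀ d0 : G,
        ((A.degSub r d0 α β).subtype).toAddMonoidHom.comp
            (AddMonoidHom.mk' (fun w : Π₀ d : G, ↥(A.degSub r d α β) => w d0)
              (fun a b => DFinsupp.add_apply a b d0))
          = ((DirectSum.component k G (fun _ => A.QuotHom α β) d0).toAddMonoidHom.comp
              (A.psi r hr hfree α β).toAddMonoidHom).comp (DFinsupp.sumAddHom F) := by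
      intro d0
      refine DFinsupp.addHom_ext fun d m => ?_
      simp only [AddMonoidHom.coe_comp, Function.comp_apply, AddMonoidHom.mk'_apply,
        LinearMap.toAddMonoidHom_coe, DFinsupp.sumAddHom_single, hF,
        Submodule.coe_subtype]
      rw [A.psi_mem r hr hfree m.2]
      by_cases h : d = d0
      · subst h
        rw [DFinsupp.single_eq_same, dsLof, DirectSum.component.lof_self]
      · rw [DFinsupp.single_eq_of_ne (Ne.symm h), dsLof, DirectSum.component.of, dif_neg h,
          Submodule.coe_zero]
    refine DFinsupp.ext fun d0 => Subtype.ext ?_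
    have := congrArg (fun (g : _ →+ A.QuotHom α β) => g w) (key d0)
    simp only [AddMonoidHom.coe_comp, Function.comp_apply, AddMonoidHom.mk'_apply,
      LinearMap.toAddMonoidHom_coe, Submodule.coe_subtype] at this
    rw [this, hw, map_zero, map_zero]
    rfl
  · intro q
    obtain ⟨z, rfl⟩ := Submodule.mkQ_surjective (A.gSub α β) q
    induction z using DirectSum.induction_on with
    | zero => exact ⟨0, by simp; exact (map_zero (A.gSub α β).mkQ).symm⟩
    | of p f =>
      refine ⟨DFinsupp.single (A.degPair r hr p.1.1 p.2.1 p.1.2 p.2.2)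
        ⟨A.proj p.1.2 p.2.2 f, ?_⟩, ?_⟩
      · exact Submodule.subset_span ⟨p.1.1, p.2.1, p.1.2, p.2.2, f,
          A.sEl r hr p.1.1 p.1.2, A.sEl_spec r hr _ _,
          A.degPair_spec r hr _ _ _ _, rfl⟩
      · rw [DFinsupp.sumAddHom_single]
        rfl
    | add a b ha hb =>
      obtain ⟨wa, hwa⟩ := ha
      obtain ⟨wb, hwb⟩ := hb
      exact ⟨wa + wb, by rw [map_add, hwa, hwb]; exact (map_add (A.gSub α β).mkQ a b).symm⟩

include hr in
theorem comp_mem (hfree : A.IsFree) (Q : QuotStr A) {α β γ : A.QuotObj} {d e : G}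
    {g : A.QuotHom β γ} {v : A.QuotHom α β}
    (hg : g ∈ A.degSub r e β γ) (hv : v ∈ A.degSub r d α β) :
    Q.comp g v ∈ A.degSub r (e * d) α γ := by
  refine Submodule.span_induction ?_ ?_ ?_ ?_ hg
  · rintro gz ⟨y', z, hy', hz, g0, sg, hsg, hdg, rfl⟩
    refine Submodule.span_induction ?_ ?_ ?_ ?_ hv
    · rintro vz ⟨x, y, hx, hy, f, s, hs, hd, rfl⟩
      obtain ⟨t, ht⟩ : ∃ t, A.smulObj t y' = y :=
        ⟨_, A.transEl_spec y' y (hy'.trans hy.symm)⟩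
      subst ht
      rw [← A.proj_smul t hy' hz g0, Q.comp_proj]
      have e1 : A.smulObj (d * s * t) y' = r β := by
        rw [A.mul_smulObj, A.mul_smulObj, ← hd, ← A.mul_smulObj,
          mul_inv_cancel, A.one_smulObj]
      have hsg2 : sg = d * s * t := A.smul_cancel hfree (hsg.trans e1.symm)
      have e2 : A.smulObj (e * d)⁻¹ (r γ) = A.smulObj s (A.smulObj t z) := by
        rw [mul_inv_rev, A.mul_smulObj, hdg, hsg2, ← A.mul_smulObj, ← A.mul_smulObj]
        congr 1
        group
      exact Submodule.subset_span ⟨x, A.smulObj t z, hx, (A.orb_smul t z).trans hz,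
        C.comp (A.smulHom t y' z g0) f, s, hs, e2, rfl⟩
    · have h0 : Q.comp (A.proj hy' hz g0) (0 : A.QuotHom α β) = 0 := by
        rw [← zero_smul k (0 : A.QuotHom α β), Q.comp_smul_right, zero_smul]
      rw [h0]; exact zero_mem _
    · intro a b _ _ iha ihb
      rw [Q.comp_add_right]; exact add_mem iha ihb
    · intro a x _ ih
      rw [Q.comp_smul_right]; exact Submodule.smul_mem _ _ ih
  · have h0 : Q.comp (0 : A.QuotHom β γ) v = 0 := by
      rw [← zero_smul k (0 : A.QuotHom β γ), Q.comp_smul_left, zero_smul]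
    rw [h0]; exact zero_mem _
  · intro a b _ _ iha ihb
    rw [Q.comp_add_left]; exact add_mem iha ihb
  · intro a x _ ih
    rw [Q.comp_smul_left]; exact Submodule.smul_mem _ _ ih

end GAction

/-- **Theorem (Cibils–Marcos).** Let `C` be a free `G`-category over `k` with a chosen
representative `r α` in each orbit `α`. For a morphism `f : x → y` (`x ∈ α`, `y ∈ β`)
its degree `deg[f] ∈ G` is defined by: if `s` is the unique element with `s·x = r α`,
then `deg[f]` is the unique element with `(deg[f])⁻¹·(r β) = s·y`. Then (a) the degree
only depends on the class `[f]` (it is invariant under replacing `f` by `u·f`); (b) the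
homogeneous components `degSub` give a direct sum decomposition of each morphism module
of `C/G`; (c) the degree is multiplicative, `deg[g∘f] = deg[g]·deg[f]`; and (d) `C/G`
is thereby a `G`-graded category over `k`. -/
theorem quotient_category_graded (k G : Type) [CommRing k] [Group G]
    (C : kCat k) (A : GAction k G C) (hfree : A.IsFree) (Q : QuotStr A)
    (r : A.QuotObj → C.Obj) (hr : ∀ α, A.orb (r α) = α) :
    -- (a) the degree of `[f]` is well defined
    (∀ (x y : C.Obj) (f : C.Hom x y) (u s s' d d' : G),
      A.smulObj s x = r (A.orb x) →
      A.smulObj s' (A.smulObj u x) = r (A.orb x) →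
      A.smulObj d⁻¹ (r (A.orb y)) = A.smulObj s y →
      A.smulObj d'⁻¹ (r (A.orb y)) = A.smulObj s' (A.smulObj u y) →
      d = d') ∧
    -- (b) the homogeneous components decompose each morphism module of `C/G`
    (∀ α β : A.QuotObj, SubmodulesInternal k (fun d => A.degSub r d α β)) ∧
    -- (c) multiplicativity of the degree on composable morphisms
    (∀ (x y z : C.Obj) (f : C.Hom x y) (g : C.Hom y z) (s sg df dg dgf : G),
      A.smulObj s x = r (A.orb x) →
      A.smulObj df⁻¹ (r (A.orb y)) = A.smulObj s y →
      A.smulObj sg y = r (A.orb y) →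
      A.smulObj dg⁻¹ (r (A.orb z)) = A.smulObj sg z →
      A.smulObj dgf⁻¹ (r (A.orb z)) = A.smulObj s z →
      dgf = dg * df) ∧
    -- (d) `C/G` is a `G`-graded category
    (∀ {α β γ : A.QuotObj} {d e : G} {g : A.QuotHom β γ} {v : A.QuotHom α β},
      g ∈ A.degSub r e β γ → v ∈ A.degSub r d α β →
      Q.comp g v ∈ A.degSub r (e * d) α γ) ∧
    (∀ α : A.QuotObj, Q.id α ∈ A.degSub r 1 α α) := by
  refine ⟨?_, ?_, ?_, ?_, ?_⟩
  · intro x y f u s s' d d' h1 h2 h3 h4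
    rw [← A.mul_smulObj] at h2 h4
    exact A.deg_unique r hfree h1 h3 h2 h4
  · exact fun α β => A.internal r hr hfree α β
  · intro x y z f g s sg df dg dgf h1 h2 h3 h4 h5
    have e1 : A.smulObj (df * s) y = r (A.orb y) := by
      rw [A.mul_smulObj, ← h2, ← A.mul_smulObj, mul_inv_cancel, A.one_smulObj]
    have hsg : sg = df * s := A.smul_cancel hfree (h3.trans e1.symm)
    have e2 : A.smulObj (dg * df)⁻¹ (r (A.orb z)) = A.smulObj s z := by
      rw [mul_inv_rev, A.mul_smulObj, h4, hsg, ← A.mul_smulObj,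
        show df⁻¹ * (df * s) = s by group]
    exact inv_injective (A.smul_cancel hfree (h5.trans e2.symm))
  · intro α β γ d e g v hg hv
    exact A.comp_mem r hr hfree Q hg hv
  · intro α
    rw [Q.id_proj (hr α)]
    exact Submodule.subset_span ⟨r α, r α, hr α, hr α, C.id (r α), 1,
      A.one_smulObj _, by rw [inv_one], rfl⟩
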